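/- Suppose for every δ ∈ [0, 1 - 1/A] there is a sequence of LCD codes [n_i, k_i, d_i]_q with n_i → ∞, lim d_i/n_i ≥ δ and lim k_i/n_i ≥ 1 - δ - 1/A (for some constant A > 1). Then there is a sequence of maximal-entanglement QUENTA codes [[n_t, k_t, d_t; c_t]]_q with lim d_t/n_t ≥ δ, lim k_t/n_t ≥ 1 - δ - 1/A, and lim c_t/n_t ∈ [δ, δ + 1/A]. -/

import Mathlib

open scoped BigOperators

/-- The Euclidean dual of a linear code. -/
def dualSub {F : Type} [Field F] {n : ℕ} (C : Submodule F (Fin n → F)) :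
    Submodule F (Fin n → F) where
  carrier := {x | ∀ c ∈ C, ∑ i, x i * c i = 0}
  add_mem' := by
    intro a b ha hb c hc
    simp only [Pi.add_apply, add_mul, Finset.sum_add_distrib, ha c hc, hb c hc, add_zero]
  zero_mem' := by
    intro c hc
    simp
  smul_mem' := by
    intro r x hx c hc
    simp only [Pi.smul_apply, smul_eq_mul, mul_assoc, ← Finset.mul_sum, hx c hc, mul_zero]

/-- The Hermitian dual (with respect to `x ↦ x^q`) of a code of length `n` over `F_{q²}`. -/
def hermDual {F : Type} [Field F] {n : ℕ} (q : ℕ) (C : Set (Fin n → F)) :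
    Set (Fin n → F) :=
  {x | ∀ c ∈ C, ∑ i, x i * (c i) ^ q = 0}

/-- Componentwise `q`-th power of a vector. -/
def frobVec {F : Type} [Field F] {n : ℕ} (q : ℕ) (x : Fin n → F) : Fin n → F :=
  fun i => (x i) ^ q

/-- Componentwise `q`-th power of a code: `C^q = {c^q : c ∈ C}`. -/
def frobCode {F : Type} [Field F] {n : ℕ} (q : ℕ) (C : Set (Fin n → F)) :
    Set (Fin n → F) :=
  frobVec q '' C

/-- The Hamming weight of a vector. -/
noncomputable def hamWt {F : Type} [Zero F] {n : ℕ} (x : Fin n → F) : ℕ :=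
  Nat.card {i : Fin n // x i ≠ 0}

/-- `d` is the minimum distance (= minimum nonzero weight) of the linear code `C`. -/
def IsMinDist {F : Type} [Zero F] {n : ℕ} (C : Set (Fin n → F)) (d : ℕ) : Prop :=
  (∃ c ∈ C, c ≠ 0 ∧ hamWt c = d) ∧ ∀ c ∈ C, c ≠ 0 → d ≤ hamWt c

/-! Since `cᵢ = nᵢ - kᵢ`, the ratio `cᵢ/nᵢ = 1 - kᵢ/nᵢ` tends to `γ = 1 - R`, and
`γ ≤ δ + 1/A` is the rate hypothesis. For `δ ≤ γ` one passes the Singleton bound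
`kᵢ + dᵢ ≤ nᵢ + 1` to the limit, giving `δ' + R ≤ 1`. The Singleton bound itself holds because
restricting a code to any `n + 1 - d` coordinates is injective: a codeword vanishing there has
weight at most `d - 1`. -/

open Filter Topology Finset

section Singleton

variable {F : Type} {n : ℕ}

lemma hamWt_add_card_le [Zero F] {x : Fin n → F} {s : Finset (Fin n)} (hx : ∀ i ∈ s, x i = 0) :
    hamWt x + #s ≤ n := by
  have hsupp : Nat.card {i // x i ≠ 0} ≤ Nat.card ↥(sᶜ : Finset (Fin n)) :=
    Nat.card_le_card_of_injective (fun i => ⟨i, Finset.mem_compl.2 fun hi => i.2 (hx _ hi)⟩)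
      fun _ _ h => Subtype.ext (by simpa using h)
  rw [Nat.card_eq_finsetCard, Finset.card_compl, Fintype.card_fin] at hsupp
  have : #s ≤ n := by simpa using Finset.card_le_univ s
  unfold hamWt; omega

lemma hamWt_pos [Zero F] {x : Fin n → F} (hx : x ≠ 0) : 0 < hamWt x := by
  obtain ⟨i, hi⟩ := Function.ne_iff.1 hx
  have : Nonempty {i // x i ≠ 0} := ⟨⟨i, hi⟩⟩
  exact Nat.card_pos

lemma finrank_le_card_of_lt_hamWt_add_card [Field F] {C : Submodule F (Fin n → F)}
    {s : Finset (Fin n)} (hC : ∀ c ∈ C, c ≠ 0 → n < hamWt c + #s) :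
    Module.finrank F C ≤ #s := by
  let restrict : (Fin n → F) →ₗ[F] (s → F) := LinearMap.funLeft F F Subtype.val
  have hinj : Function.Injective (restrict ∘ₗ C.subtype) := by
    refine (injective_iff_map_eq_zero _).2 fun c hc => ?_
    by_contra hne
    have hvanish : ∀ i ∈ s, (c : Fin n → F) i = 0 := fun i hi => congrFun hc ⟨i, hi⟩
    exact absurd (hC c c.2 (by simpa using hne)) (not_lt.2 (hamWt_add_card_le hvanish))
  simpa using LinearMap.finrank_le_finrank_of_injective hinj

theorem IsMinDist.finrank_add_le [Field F] {C : Submodule F (Fin n → F)} {d : ℕ}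
    (hd : IsMinDist (C : Set (Fin n → F)) d) : Module.finrank F C + d ≤ n + 1 := by
  obtain ⟨⟨c, -, hc0, rfl⟩, hmin⟩ := hd
  have hpos := hamWt_pos hc0
  have hle : hamWt c ≤ n := by simpa using hamWt_add_card_le (s := ∅) (x := c) (by simp)
  obtain ⟨s, -, hs⟩ := (univ : Finset (Fin n)).exists_subset_card_eq
    (n := n + 1 - hamWt c) (by rw [card_univ, Fintype.card_fin]; omega)
  have hrank := finrank_le_card_of_lt_hamWt_add_card (C := C) (s := s)
    fun x hx hx0 => by have := hmin x hx hx0; omega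
  omega

end Singleton

lemma le_one_of_tendsto_div_of_le_add {a b : ℕ → ℝ} {c L : ℝ} (hb : Tendsto b atTop atTop)
    (hab : ∀ᶠ i in atTop, a i ≤ b i + c) (hlim : Tendsto (fun i => a i / b i) atTop (𝓝 L)) :
    L ≤ 1 := by
  have hbound : Tendsto (fun i => 1 + c / b i) atTop (𝓝 1) := by
    simpa using tendsto_const_nhds.add (tendsto_const_nhds.div_atTop hb)
  refine le_of_tendsto_of_tendsto hlim hbound ?_
  filter_upwards [hab, hb.eventually_gt_atTop 0] with i hi hpos
  rw [div_le_iff₀ hpos, add_mul, div_mul_cancel₀ _ hpos.ne']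
  linarith

lemma tendsto_natSub_div {k n : ℕ → ℕ} {R : ℝ} (hkn : ∀ i, k i ≤ n i)
    (hn : Tendsto n atTop atTop) (hk : Tendsto (fun i => (k i : ℝ) / n i) atTop (𝓝 R)) :
    Tendsto (fun i => ((n i - k i : ℕ) : ℝ) / n i) atTop (𝓝 (1 - R)) := by
  refine (tendsto_const_nhds.sub hk).congr' ?_
  filter_upwards [hn.eventually_gt_atTop 0] with i hpos
  rw [Nat.cast_sub (hkn i), sub_div, div_self (by positivity)]

theorem asymptotically_good_maximal_entanglement_quenta_general
    {F : Type} [Field F]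
    (A : ℝ) (δ : ℝ)
    (n k d : ℕ → ℕ)
    (C : ∀ i : ℕ, Submodule F (Fin (n i) → F))
    (hn : Tendsto n atTop atTop)
    (hk : ∀ i, Module.finrank F (C i) = k i)
    (hd : ∀ i, IsMinDist ((C i : Set (Fin (n i) → F))) (d i))
    (δ' R : ℝ)
    (hdlim : Tendsto (fun i => (d i : ℝ) / (n i : ℝ)) atTop (nhds δ')) (hδ' : δ ≤ δ')
    (hklim : Tendsto (fun i => (k i : ℝ) / (n i : ℝ)) atTop (nhds R))
    (hR : 1 - δ - 1 / A ≤ R) :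
    ∃ (c : ℕ → ℕ) (γ : ℝ),
      (∀ i, c i = n i - k i) ∧
      Tendsto (fun i => (c i : ℝ) / (n i : ℝ)) atTop (nhds γ) ∧
      δ ≤ γ ∧ γ ≤ δ + 1 / A := by
  have hkn : ∀ i, k i ≤ n i := fun i => hk i ▸ by simpa using (C i).finrank_le
  have hsingleton : ∀ i, (d i + k i : ℝ) ≤ n i + 1 := fun i => by
    have := (hd i).finrank_add_le
    rw [hk i] at this
    exact_mod_cast (add_comm (d i) (k i)).trans_le this
  have hlim : δ' + R ≤ 1 :=
    le_one_of_tendsto_div_of_le_add (tendsto_natCast_atTop_atTop.comp hn)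
      (.of_forall hsingleton) ((hdlim.add hklim).congr fun i => (add_div _ _ _).symm)
  exact ⟨fun i => n i - k i, 1 - R, fun _ => rfl, tendsto_natSub_div hkn hn hklim,
    by linarith, by linarith⟩

/-- given a sequence of LCD codes `[nᵢ, kᵢ, dᵢ]_q` with `nᵢ → ∞`,
`lim dᵢ/nᵢ = δ' ≥ δ` and `lim kᵢ/nᵢ = R ≥ 1 - δ - 1/A` (for a constant `A > 1` and
`δ ∈ [0, 1 - 1/A]`), there is a sequence of maximal-entanglement QUENTA codes
`[[nᵢ, kᵢ, dᵢ; cᵢ]]_q` with `cᵢ = nᵢ - kᵢ`, the same rate and relative-distance limits,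
and `lim cᵢ/nᵢ = γ ∈ [δ, δ + 1/A]`. -/
theorem asymptotically_good_maximal_entanglement_quenta
    {F : Type} [Field F] [Fintype F]
    (A : ℝ) (hA : 1 < A) (δ : ℝ) (hδ0 : 0 ≤ δ) (hδ1 : δ ≤ 1 - 1 / A)
    (n k d : ℕ → ℕ)
    (C : ∀ i : ℕ, Submodule F (Fin (n i) → F))
    (hn : Tendsto n atTop atTop)
    (hlcd : ∀ i, C i ⊓ dualSub (C i) = ⊥)
    (hk : ∀ i, Module.finrank F (C i) = k i)
    (hd : ∀ i, IsMinDist ((C i : Set (Fin (n i) → F))) (d i))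
    (δ' R : ℝ)
    (hdlim : Tendsto (fun i => (d i : ℝ) / (n i : ℝ)) atTop (nhds δ')) (hδ' : δ ≤ δ')
    (hklim : Tendsto (fun i => (k i : ℝ) / (n i : ℝ)) atTop (nhds R))
    (hR : 1 - δ - 1 / A ≤ R) :
    ∃ (c : ℕ → ℕ) (γ : ℝ),
      (∀ i, c i = n i - k i) ∧
      Tendsto (fun i => (c i : ℝ) / (n i : ℝ)) atTop (nhds γ) ∧
      δ ≤ γ ∧ γ ≤ δ + 1 / A :=
  asymptotically_good_maximal_entanglement_quenta_general A δ n k d C hn hk hd δ' R hdlim hδ' hklim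
    hR
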